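/- arXiv:2103.01551 — 3 statements merged into one kernel-verified Lean document; each statement's English description precedes it below -/
import Mathlib

section
/- Suppose x : ZMod N → ℂ is a real signal with x̂[1] = 1 and x̂[k-1] ≠ 0 for some k. Then x̂[k] = M₃(x)[k, -1] / (conj(x̂[1])·conj(x̂[k-1])), so that the k-th Fourier coefficient is determined from x̂[k-1] and the single bispectrum entry M₃(x)[k, -1] (using x̂[-ℓ] = conj(x̂[ℓ]) for real x). -/
open Finset in
noncomputable def dft (N : ℕ) [NeZero N] (x : ZMod N → ℂ) (k : ZMod N) : ℂ :=
  ∑ n : ZMod N, x n * Complex.exp (-2 * Real.pi * Complex.I * ((k.val : ℂ) * (n.val : ℂ)) / N)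

noncomputable def bispectrum (N : ℕ) [NeZero N] (x : ZMod N → ℂ) (k₁ k₂ : ZMod N) : ℂ :=
  dft N x k₁ * dft N x k₂ * dft N x (-(k₁ + k₂))

lemma dft_neg_real (N : ℕ) [NeZero N] (x : ZMod N → ℝ) (ℓ : ZMod N) :
    dft N (fun n => (x n : ℂ)) (-ℓ) = starRingEnd ℂ (dft N (fun n => (x n : ℂ)) ℓ) := by
  unfold dft
  rw [map_sum]
  refine Finset.sum_congr rfl fun n _ => ?_
  rw [map_mul, Complex.conj_ofReal, ← Complex.exp_conj]
  congr 1
  have hconj : (starRingEnd ℂ) (-2 * ↑Real.pi * Complex.I * ((ℓ.val : ℂ) * (n.val : ℂ)) / ↑N)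
      = 2 * Real.pi * Complex.I * ((ℓ.val : ℂ) * (n.val : ℂ)) / N := by
    simp only [map_div₀, map_mul, map_neg, map_ofNat, Complex.conj_I, Complex.conj_ofReal,
      Complex.conj_natCast]
    ring
  rw [hconj]
  rw [Complex.exp_eq_exp_iff_exists_int]
  by_cases hℓ : ℓ = 0
  · exact ⟨0, by simp [hℓ]⟩
  · refine ⟨-(n.val : ℤ), ?_⟩
    have hv : (-ℓ).val = N - ℓ.val := by simp [ZMod.neg_val, hℓ]
    have hle : ℓ.val ≤ N := (ZMod.val_lt ℓ).le
    have hN0 : (N : ℂ) ≠ 0 := Nat.cast_ne_zero.mpr (NeZero.ne N)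
    rw [hv]
    push_cast [Nat.cast_sub hle]
    field_simp
    ring

theorem fourier_coeff_from_bispectrum_entry (N : ℕ) [NeZero N] (hN : 1 ≤ N)
    (x : ZMod N → ℝ) (k : ZMod N)
    (h1 : dft N (fun n => (x n : ℂ)) 1 = 1)
    (hk : dft N (fun n => (x n : ℂ)) 1 * dft N (fun n => (x n : ℂ)) (k - 1) ≠ 0) :
    dft N (fun n => (x n : ℂ)) k
      = bispectrum N (fun n => (x n : ℂ)) k (-1)
        / (starRingEnd ℂ (dft N (fun n => (x n : ℂ)) 1)
            * starRingEnd ℂ (dft N (fun n => (x n : ℂ)) (k - 1))) := by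
  have h2 : dft N (fun n => (x n : ℂ)) (k - 1) ≠ 0 := right_ne_zero_of_mul hk
  have hd1 : dft N (fun n => (x n : ℂ)) 1 ≠ 0 := left_ne_zero_of_mul hk
  have e1 : dft N (fun n => (x n : ℂ)) (-1) = starRingEnd ℂ (dft N (fun n => (x n : ℂ)) 1) :=
    dft_neg_real N x 1
  have e2 : dft N (fun n => (x n : ℂ)) (-(k + -1)) = starRingEnd ℂ (dft N (fun n => (x n : ℂ)) (k - 1)) := by
    have : -(k + -1) = -(k - 1) := by ring_nf
    rw [this]
    exact dft_neg_real N x (k - 1)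
  unfold bispectrum
  rw [e1, e2]
  have c1 : starRingEnd ℂ (dft N (fun n => (x n : ℂ)) 1) ≠ 0 := by
    simpa using hd1
  have c2 : starRingEnd ℂ (dft N (fun n => (x n : ℂ)) (k - 1)) ≠ 0 := by
    simpa using h2
  field_simp
end

section
/- Suppose x, y : ZMod N → ℝ are real signals whose DFTs satisfy x̂[0] = ŷ[0], x̂[1] = ŷ[1] = 1, all Fourier coefficients of x are nonzero, and M₃(x) = M₃(y) entrywise. Then x̂[k] = ŷ[k] for all k, and hence x = y. -/
lemma dft_eq_zmod (N : ℕ) [NeZero N] (x : ZMod N → ℂ) (k : ZMod N) :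
    dft N x k = ZMod.dft x k := by
  rw [dft, ZMod.dft_apply]
  refine Finset.sum_congr rfl fun j _ => ?_
  rw [ZMod.stdAddChar_apply, smul_eq_mul, mul_comm]
  congr 1
  have : -(j * k) = ((-(j.val * k.val : ℤ) : ℤ) : ZMod N) := by push_cast [ZMod.natCast_zmod_val]; ring
  rw [this, ZMod.toCircle_intCast]
  push_cast
  ring_nf

lemma dft_real_conj (N : ℕ) [NeZero N] (x : ZMod N → ℝ) (k : ZMod N) :
    starRingEnd ℂ (dft N (fun n => (x n : ℂ)) k) = dft N (fun n => (x n : ℂ)) (-k) := by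
  rw [dft_eq_zmod, dft_eq_zmod, ZMod.dft_apply, ZMod.dft_apply, map_sum]
  refine Finset.sum_congr rfl fun j _ => ?_
  rw [ZMod.stdAddChar_apply, ZMod.stdAddChar_apply, smul_eq_mul, smul_eq_mul, map_mul,
    Complex.conj_ofReal]
  congr 1
  rw [← Circle.coe_inv_eq_conj, ← AddChar.map_neg_eq_inv]
  ring_nf

theorem bispectrum_determines_real_signal (N : ℕ) [NeZero N] (hN : 1 ≤ N)
    (x y : ZMod N → ℝ)
    (h0 : dft N (fun n => (x n : ℂ)) 0 = dft N (fun n => (y n : ℂ)) 0)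
    (hx1 : dft N (fun n => (x n : ℂ)) 1 = 1)
    (hy1 : dft N (fun n => (y n : ℂ)) 1 = 1)
    (hnz : ∀ k, dft N (fun n => (x n : ℂ)) k ≠ 0)
    (hM : ∀ k₁ k₂, bispectrum N (fun n => (x n : ℂ)) k₁ k₂
            = bispectrum N (fun n => (y n : ℂ)) k₁ k₂) :
    (∀ k, dft N (fun n => (x n : ℂ)) k = dft N (fun n => (y n : ℂ)) k) ∧ x = y := by
  set X := dft N (fun n => (x n : ℂ)) with hX
  set Y := dft N (fun n => (y n : ℂ)) with hY
  have key : ∀ m : ℕ, X (m : ZMod N) = Y (m : ZMod N) := by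
    intro m
    induction m with
    | zero => simpa using h0
    | succ m ih =>
      have hb := hM (m : ZMod N) 1
      rw [bispectrum, bispectrum, ← hX, ← hY, hx1, hy1, mul_one, mul_one] at hb
      rw [ih] at hb
      have hYm : Y (m : ZMod N) ≠ 0 := by rw [← ih]; exact hnz _
      have hneg : X (-((m : ZMod N) + 1)) = Y (-((m : ZMod N) + 1)) :=
        mul_left_cancel₀ hYm hb
      have h1 : X ((m : ZMod N) + 1) = starRingEnd ℂ (X (-((m : ZMod N) + 1))) := by
        rw [hX, dft_real_conj, neg_neg]
      have h2 : Y ((m : ZMod N) + 1) = starRingEnd ℂ (Y (-((m : ZMod N) + 1))) := by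
        rw [hY, dft_real_conj, neg_neg]
      rw [Nat.cast_succ, h1, h2, hneg]
  have hall : ∀ k, X k = Y k := fun k => by
    have := key k.val
    rwa [ZMod.natCast_zmod_val] at this
  refine ⟨hall, ?_⟩
  have hdft : (ZMod.dft (fun n => (x n : ℂ))) = (ZMod.dft (fun n => (y n : ℂ))) := by
    funext k
    rw [← dft_eq_zmod, ← dft_eq_zmod]
    exact hall k
  have := ZMod.dft.injective hdft
  funext n
  exact Complex.ofReal_injective (congrFun this n)
end

section
/- For a real signal x : ZMod N → ℝ with all DFT coefficients of unit modulus (|x̂[k]| = 1 for all k) and x̂[1] = 1, the N-1 bispectrum entries {M₃(x)[k, -1] : k = 2, …, N-1} together with x̂[0] determine all Fourier coefficients x̂[k], and hence x, uniquely among such signals. -/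
open Complex ComplexConjugate
open scoped ZMod

section

variable {N : ℕ} [NeZero N]

theorem dft_eq_zmod_dft (z : ZMod N → ℂ) : dft N z = 𝓕 z := by
  ext k
  refine Finset.sum_congr rfl fun n _ => ?_
  have : -(n * k) = ((-(n.val * k.val : ℤ) : ℤ) : ZMod N) := by
    push_cast [ZMod.natCast_zmod_val]
    ring
  rw [smul_eq_mul, mul_comm, this, ZMod.stdAddChar_coe]
  push_cast
  ring_nf

theorem dft_injective : Function.Injective (dft N) := by
  simpa only [funext dft_eq_zmod_dft] using (𝓕 : (ZMod N → ℂ) ≃ₗ[ℂ] _).injective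

theorem dft_ofReal_neg (x : ZMod N → ℝ) (k : ZMod N) :
    dft N (fun n => (x n : ℂ)) (-k) = conj (dft N (fun n => (x n : ℂ)) k) := by
  simp only [dft_eq_zmod_dft, ZMod.dft_apply, map_sum, smul_eq_mul, map_mul, conj_ofReal,
    ← AddChar.map_neg_eq_conj, mul_neg, neg_neg]

theorem dft_ofReal_eq_bispectrum_mul (x : ZMod N → ℝ)
    (hu : ∀ k, ‖dft N (fun n => (x n : ℂ)) k‖ = 1) (h1 : dft N (fun n => (x n : ℂ)) 1 = 1)
    (k : ZMod N) :
    dft N (fun n => (x n : ℂ)) k =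
      bispectrum N (fun n => (x n : ℂ)) k (-1) * dft N (fun n => (x n : ℂ)) (k - 1) := by
  have h_neg_one : dft N (fun n => (x n : ℂ)) (-1) = 1 := by
    rw [dft_ofReal_neg, h1, map_one]
  have h_unit :
      conj (dft N (fun n => (x n : ℂ)) (k - 1)) * dft N (fun n => (x n : ℂ)) (k - 1) = 1 := by
    rw [mul_comm, mul_conj, normSq_eq_norm_sq, hu, one_pow, ofReal_one]
  rw [bispectrum, h_neg_one, mul_one, ← sub_eq_add_neg, dft_ofReal_neg, mul_assoc, h_unit,
    mul_one]

end

theorem bispectrum_column_determines_unimodular_general (N : ℕ) [NeZero N]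
    (x y : ZMod N → ℝ)
    (hxu : ∀ k, ‖dft N (fun n => (x n : ℂ)) k‖ = 1)
    (hyu : ∀ k, ‖dft N (fun n => (y n : ℂ)) k‖ = 1)
    (hx1 : dft N (fun n => (x n : ℂ)) 1 = 1)
    (hy1 : dft N (fun n => (y n : ℂ)) 1 = 1)
    (hM : ∀ k, bispectrum N (fun n => (y n : ℂ)) k (-1)
            = bispectrum N (fun n => (x n : ℂ)) k (-1)) :
    (∀ k, dft N (fun n => (y n : ℂ)) k = dft N (fun n => (x n : ℂ)) k) ∧ y = x := by
  have h_succ : ∀ m : ℕ,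
      dft N (fun n => (y n : ℂ)) (m + 1) = dft N (fun n => (x n : ℂ)) (m + 1) := by
    intro m
    induction m with
    | zero => rw [Nat.cast_zero, zero_add, hx1, hy1]
    | succ m ih =>
      rw [dft_ofReal_eq_bispectrum_mul y hyu hy1, dft_ofReal_eq_bispectrum_mul x hxu hx1,
        Nat.cast_succ, add_sub_cancel_right, hM, ih]
  have h_dft : ∀ k, dft N (fun n => (y n : ℂ)) k = dft N (fun n => (x n : ℂ)) k := fun k => by
    simpa only [ZMod.natCast_zmod_val, sub_add_cancel] using h_succ (k - 1).val
  refine ⟨h_dft, funext fun n => ?_⟩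
  exact_mod_cast congrFun (dft_injective (funext h_dft)) n

theorem bispectrum_column_determines_unimodular (N : ℕ) [NeZero N] (hN : 2 ≤ N)
    (x y : ZMod N → ℝ)
    (hxu : ∀ k, ‖dft N (fun n => (x n : ℂ)) k‖ = 1)
    (hyu : ∀ k, ‖dft N (fun n => (y n : ℂ)) k‖ = 1)
    (hx1 : dft N (fun n => (x n : ℂ)) 1 = 1)
    (hy1 : dft N (fun n => (y n : ℂ)) 1 = 1)
    (h0 : dft N (fun n => (y n : ℂ)) 0 = dft N (fun n => (x n : ℂ)) 0)
    (hM : ∀ k, bispectrum N (fun n => (y n : ℂ)) k (-1)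
            = bispectrum N (fun n => (x n : ℂ)) k (-1)) :
    (∀ k, dft N (fun n => (y n : ℂ)) k = dft N (fun n => (x n : ℂ)) k) ∧ y = x :=
  bispectrum_column_determines_unimodular_general N x y hxu hyu hx1 hy1 hM
end
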